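/- arXiv:1111.0094 — 2 statements merged into one kernel-verified Lean document; each statement's English description precedes it below -/
import Mathlib

section
/- (Generalized Elder theorem) For all positive integers n, k, and r, V_k(n) = Q_{rk}(n) + Q_{rk}(n+k) + Q_{rk}(n+2k) + ... + Q_{rk}(n+(r-1)k), i.e., V_k(n) equals the sum of Q_{rk}(n + ik) for i = 0 to r-1. -/
/-- Number of partitions of `n`. -/
def P (n : ℕ) : ℕ := Fintype.card (Nat.Partition n)

/-- Partition function extended to `ℤ`, zero for negative arguments. -/
def PZ (z : ℤ) : ℕ := if z < 0 then 0 else P z.toNat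

/-- Total number of occurrences of the part `k` over all partitions of `n`. -/
def Q (k n : ℕ) : ℕ := ∑ p : Nat.Partition n, Multiset.count k p.parts

/-- `Q` extended to `ℤ`, zero for non-positive arguments. -/
def QZ (k : ℕ) (z : ℤ) : ℕ := if z ≤ 0 then 0 else Q k z.toNat

/-- Sum over all partitions of `n` of the number of distinct part-sizes. -/
def S (n : ℕ) : ℕ := ∑ p : Nat.Partition n, p.parts.toFinset.card

/-- Number of pairs `(λ, m)` with `λ` a partition of `n` and `m` a part-size
occurring at least `k` times in `λ`. -/
def V (k n : ℕ) : ℕ :=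
  ∑ p : Nat.Partition n, (p.parts.toFinset.filter (fun m => k ≤ p.parts.count m)).card


/-!
Deleting `i` copies of a part `m` identifies the partitions of `n` that contain `m` at least
`i` times with the partitions of `n - i m`. Summing over `i` gives
`Q_j(n) = ∑_{i ≥ 1} p(n - i j)`, and summing over `m` gives `V_k(n) = ∑_{m ≥ 1} p(n - m k)`.
Writing `m = j r - i` with `j ≥ 1` and `0 ≤ i < r` turns the latter into
`∑_{i < r} ∑_{j ≥ 1} p(n + i k - j r k) = ∑_{i < r} Q_{rk}(n + i k)`.
-/

open Finset

namespace Nat.Partition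

variable {n : ℕ}

def removeParts (s : Multiset ℕ) (hs : ∀ a ∈ s, 0 < a) (hsn : s.sum ≤ n) :
    {p : n.Partition // s ≤ p.parts} ≃ (n - s.sum).Partition where
  toFun p :=
    { parts := p.1.parts - s
      parts_pos := fun ha => p.1.parts_pos (Multiset.mem_of_le tsub_le_self ha)
      parts_sum := by
        have := congrArg Multiset.sum (tsub_add_cancel_of_le p.2)
        rw [Multiset.sum_add, p.1.parts_sum] at this
        omega }
  invFun q :=
    ⟨{ parts := q.parts + s
       parts_pos := fun ha => (Multiset.mem_add.mp ha).elim q.parts_pos (hs _)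
       parts_sum := by rw [Multiset.sum_add, q.parts_sum]; omega },
     Multiset.le_add_left _ _⟩
  left_inv p := Subtype.ext (Nat.Partition.ext (tsub_add_cancel_of_le p.2))
  right_inv q := Nat.Partition.ext (add_tsub_cancel_right _ _)

theorem count_mul_le (p : n.Partition) (m : ℕ) : p.parts.count m * m ≤ n := by
  have hle : Multiset.replicate (p.parts.count m) m ≤ p.parts :=
    Multiset.le_count_iff_replicate_le.mp le_rfl
  obtain ⟨t, ht⟩ := Multiset.le_iff_exists_add.mp hle
  have := congrArg Multiset.sum ht
  rw [Multiset.sum_add, Multiset.sum_replicate, smul_eq_mul, p.parts_sum] at this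
  omega

theorem card_filter_le_count {m : ℕ} (hm : 0 < m) (i : ℕ) :
    #{p : n.Partition | i ≤ p.parts.count m} = PZ (n - i * m) := by
  by_cases h : i * m ≤ n
  · have hPZ : PZ (n - i * m) = P (n - i * m) := by
      rw [PZ, if_neg (by omega), ← Nat.cast_mul, ← Nat.cast_sub h, Int.toNat_natCast]
    simp_rw [hPZ, P, ← Fintype.card_subtype, Multiset.le_count_iff_replicate_le]
    refine (Fintype.card_congr (removeParts _ (fun a ha => ?_) ?_)).trans ?_
    · rwa [Multiset.eq_of_mem_replicate ha]
    · rwa [Multiset.sum_replicate, smul_eq_mul]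
    · rw [Multiset.sum_replicate, smul_eq_mul]
  · rw [PZ, if_pos (by omega), Finset.card_eq_zero, filter_eq_empty_iff]
    intro p _ hp
    have := Nat.mul_le_mul_right m hp
    have := p.count_mul_le m
    omega

end Nat.Partition

theorem Finset.sum_range_mul_eq_sum_sum {M : Type*} [AddCommMonoid M] (f : ℕ → M) (q r : ℕ) :
    ∑ t ∈ range (q * r), f t = ∑ s ∈ range r, ∑ j ∈ range q, f (j * r + s) := by
  induction q with
  | zero => simp
  | succ q ih => simp only [Nat.succ_mul, sum_range_add, ih, sum_range_succ, sum_add_distrib]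

theorem Q_eq_sum_PZ {j n N : ℕ} (hj : 0 < j) (hN : n ≤ N) :
    Q j n = ∑ i ∈ range N, PZ (n - (i + 1) * j) := by
  have hcount (p : n.Partition) : p.parts.count j = #{i ∈ range N | i + 1 ≤ p.parts.count j} := by
    have : p.parts.count j ≤ N := (Nat.le_mul_of_pos_right _ hj).trans ((p.count_mul_le j).trans hN)
    have hrange : {i ∈ range N | i + 1 ≤ p.parts.count j} = range (p.parts.count j) := by
      ext i; simp only [mem_filter, mem_range]; omega
    rw [hrange, card_range]
  calc Q j n = ∑ p : n.Partition, #{i ∈ range N | i + 1 ≤ p.parts.count j} :=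
        sum_congr rfl fun p _ => hcount p
    _ = ∑ i ∈ range N, #{p : n.Partition | i + 1 ≤ p.parts.count j} :=
        sum_card_bipartiteAbove_eq_sum_card_bipartiteBelow
          (s := univ) (t := range N) (r := fun (p : n.Partition) i => i + 1 ≤ p.parts.count j)
    _ = _ := sum_congr rfl fun i _ => by
        rw [Nat.Partition.card_filter_le_count hj]; push_cast; ring_nf

theorem V_eq_sum_PZ {k n N : ℕ} (hk : 0 < k) (hN : n ≤ N) :
    V k n = ∑ m ∈ range N, PZ (n - (m + 1) * k) := by
  have hparts (p : n.Partition) : #{m ∈ p.parts.toFinset | k ≤ p.parts.count m}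
      = #{m ∈ range N | k ≤ p.parts.count (m + 1)} := by
    refine card_nbij' (· - 1) (· + 1) ?_ ?_ ?_ ?_
    · intro m hm
      simp only [mem_coe, mem_filter, Multiset.mem_toFinset, mem_range] at hm ⊢
      have hm_pos := p.parts_pos hm.1
      have hm_le := p.le_of_mem_parts hm.1
      exact ⟨by omega, by rw [Nat.sub_add_cancel hm_pos]; exact hm.2⟩
    · intro m hm
      simp only [mem_coe, mem_filter, Multiset.mem_toFinset, mem_range] at hm ⊢
      exact ⟨Multiset.count_pos.mp (hk.trans_le hm.2), hm.2⟩
    · intro m hm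
      simp only [mem_coe, mem_filter, Multiset.mem_toFinset] at hm
      exact Nat.sub_add_cancel (p.parts_pos hm.1)
    · intro m _
      exact Nat.add_sub_cancel m 1
  calc V k n = ∑ p : n.Partition, #{m ∈ range N | k ≤ p.parts.count (m + 1)} :=
        sum_congr rfl fun p _ => hparts p
    _ = ∑ m ∈ range N, #{p : n.Partition | k ≤ p.parts.count (m + 1)} :=
        sum_card_bipartiteAbove_eq_sum_card_bipartiteBelow
          (s := univ) (t := range N) (r := fun (p : n.Partition) m => k ≤ p.parts.count (m + 1))
    _ = _ := sum_congr rfl fun m _ => by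
        rw [Nat.Partition.card_filter_le_count m.succ_pos]; push_cast; ring_nf

theorem stmt_6_general (n k r : ℕ) (hk : 0 < k) (hr : 0 < r) :
    V k n = ∑ i ∈ Finset.range r, Q (r * k) (n + i * k) := by
  have hN : n + r * k ≤ (n + r * k) * r := Nat.le_mul_of_pos_right _ hr
  calc V k n = ∑ t ∈ range ((n + r * k) * r), PZ (n - (t + 1) * k) := V_eq_sum_PZ hk (by omega)
    _ = ∑ s ∈ range r, ∑ j ∈ range (n + r * k), PZ (n - (j * r + s + 1) * k) := by
        rw [sum_range_mul_eq_sum_sum]; push_cast; rfl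
    _ = ∑ s ∈ range r, ∑ j ∈ range (n + r * k),
          PZ (((n + (r - 1 - s) * k : ℕ) : ℤ) - (j + 1) * (r * k : ℕ)) := by
        refine sum_congr rfl fun s hs => sum_congr rfl fun j _ => ?_
        have hs : s < r := mem_range.mp hs
        have hrs : ((r - 1 - s : ℕ) : ℤ) = r - 1 - s := by omega
        push_cast [hrs]; ring_nf
    _ = ∑ i ∈ range r, ∑ j ∈ range (n + r * k),
          PZ (((n + i * k : ℕ) : ℤ) - (j + 1) * (r * k : ℕ)) :=
        sum_range_reflect (fun i => ∑ j ∈ range (n + r * k),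
          PZ (((n + i * k : ℕ) : ℤ) - (j + 1) * (r * k : ℕ))) r
    _ = _ := sum_congr rfl fun i hi => by
        have hik := Nat.mul_le_mul_right k (mem_range.mp hi).le
        exact (Q_eq_sum_PZ (Nat.mul_pos hr hk) (by omega)).symm

theorem stmt_6 (n k r : ℕ) (hn : 0 < n) (hk : 0 < k) (hr : 0 < r) :
    V k n = ∑ i ∈ Finset.range r, Q (r * k) (n + i * k) :=
  stmt_6_general n k r hk hr
end

section
/- For all positive integers n and k, the number of partitions of n+k obtained by taking a partition of n and either (a) adjoining k new parts equal to 1, or (b) increasing by 1 each of some maximal run of k equal parts (i.e., for each part-size m occurring with multiplicity at least k in a partition of n, replacing k copies of m by k copies of m+1), counted as the number of such (partition, operation) pairs, equals Q_k(n+k). In formula: P(n) + V_k(n) = Q_k(n+k). -/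
open Finset

namespace Nat.Partition

variable {N : ℕ}

theorem sum_sub_replicate_add (p : Partition N) {m j : ℕ} (h : j ≤ p.parts.count m) :
    (p.parts - Multiset.replicate j m).sum + m * j = N := by
  have := congrArg Multiset.sum (tsub_add_cancel_of_le (Multiset.le_count_iff_replicate_le.mp h))
  rwa [Multiset.sum_add, Multiset.sum_replicate, smul_eq_mul, p.parts_sum, mul_comm j] at this

theorem mul_count_le (p : Partition N) (m : ℕ) : m * p.parts.count m ≤ N := by
  have := p.sum_sub_replicate_add (m := m) le_rfl
  omega

theorem count_le_div (p : Partition N) {m : ℕ} (hm : 0 < m) : p.parts.count m ≤ N / m :=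
  (Nat.le_div_iff_mul_le hm).2 (by simpa only [mul_comm] using p.mul_count_le m)

def subReplicateEquiv {m j : ℕ} (hm : 0 < m) (h : m * j ≤ N) :
    {p : Partition N // j ≤ p.parts.count m} ≃ Partition (N - m * j) where
  toFun p :=
    { parts := p.1.parts - Multiset.replicate j m
      parts_pos := fun hi => p.1.parts_pos (Multiset.mem_of_le (Multiset.sub_le_self _ _) hi)
      parts_sum := by have := p.1.sum_sub_replicate_add p.2; omega }
  invFun q :=
    ⟨{ parts := q.parts + Multiset.replicate j m
       parts_pos := by
         simp only [Multiset.mem_add, Multiset.mem_replicate]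
         rintro i (hi | ⟨-, rfl⟩)
         exacts [q.parts_pos hi, hm]
       parts_sum := by
         rw [Multiset.sum_add, Multiset.sum_replicate, smul_eq_mul, q.parts_sum, mul_comm j]
         omega },
      by simp⟩
  left_inv p := Subtype.ext <| Partition.ext <|
    tsub_add_cancel_of_le (Multiset.le_count_iff_replicate_le.mp p.2)
  right_inv q := Partition.ext <| add_tsub_cancel_right _ _

theorem card_filter_le_count_s13 {m j : ℕ} (hm : 0 < m) (h : m * j ≤ N) :
    #{p : Partition N | j ≤ p.parts.count m} = P (N - m * j) := by
  rw [← Fintype.card_subtype]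
  exact Fintype.card_congr (subReplicateEquiv hm h)

end Nat.Partition

theorem Q_eq_sum_P {k : ℕ} (N : ℕ) (hk : 0 < k) :
    Q k N = ∑ j ∈ range (N / k), P (N - k * (j + 1)) := by
  have layers (p : Nat.Partition N) :
      p.parts.count k = #{j ∈ range (N / k) | j < p.parts.count k} := by
    have := p.count_le_div hk
    rw [show {j ∈ range (N / k) | j < p.parts.count k} = range (p.parts.count k) by
      ext j; simp only [mem_filter, mem_range]; omega, card_range]
  rw [Q, sum_congr rfl fun p _ => layers p]
  refine (sum_card_bipartiteAbove_eq_sum_card_bipartiteBelow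
    (fun (p : Nat.Partition N) j => j < p.parts.count k)).trans ?_
  refine sum_congr rfl fun j hj => Nat.Partition.card_filter_le_count_s13 hk ?_
  exact (Nat.le_div_iff_mul_le hk).1 (mem_range.1 hj) |>.trans_eq' (mul_comm _ _)

theorem V_eq_sum_P {k : ℕ} (n : ℕ) (hk : 0 < k) :
    V k n = ∑ j ∈ range (n / k), P (n - k * (j + 1)) := by
  have sizes (p : Nat.Partition n) :
      #{m ∈ p.parts.toFinset | k ≤ p.parts.count m}
        = #{j ∈ range (n / k) | k ≤ p.parts.count (j + 1)} := by
    refine card_nbij' (· - 1) (· + 1) ?_ ?_ ?_ ?_ <;>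
      simp only [coe_filter, Multiset.mem_toFinset, mem_range]
    · rintro m ⟨hm, hkm⟩
      have hmk : m * k ≤ n := (Nat.mul_le_mul_left m hkm).trans (p.mul_count_le m)
      have := (Nat.le_div_iff_mul_le hk).2 hmk
      have := p.parts_pos hm
      exact ⟨show m - 1 < n / k by omega, by rwa [Nat.sub_add_cancel this]⟩
    · rintro j ⟨-, hkj⟩
      exact ⟨Multiset.count_pos.1 (hk.trans_le hkj), hkj⟩
    · rintro m ⟨hm, -⟩
      exact Nat.sub_add_cancel (p.parts_pos hm)
    · intro j _
      exact Nat.add_sub_cancel j 1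
  rw [V, sum_congr rfl fun p _ => sizes p]
  refine (sum_card_bipartiteAbove_eq_sum_card_bipartiteBelow
    (fun (p : Nat.Partition n) j => k ≤ p.parts.count (j + 1))).trans ?_
  refine sum_congr rfl fun j hj => ?_
  rw [mul_comm k]
  exact Nat.Partition.card_filter_le_count_s13 j.succ_pos
    ((Nat.le_div_iff_mul_le hk).1 (mem_range.1 hj))

theorem stmt_13_general (n k : ℕ) (hk : 0 < k) :
    P n + V k n = Q k (n + k) := by
  rw [Q_eq_sum_P _ hk, V_eq_sum_P _ hk, Nat.add_div_right _ hk, sum_range_succ', add_comm]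
  congr 1
  · refine sum_congr rfl fun j _ => congrArg P ?_
    rw [mul_add k (j + 1)]
    omega
  · simp

theorem stmt_13 (n k : ℕ) (hn : 0 < n) (hk : 0 < k) :
    P n + V k n = Q k (n + k) :=
  stmt_13_general n k hk
end
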